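/- With the setup of the context (in particular √α L + M̄ Π_I invertible), let J^red = [[M, Lᵀ],[L, −(1/α) M̄ M⁻¹ Π_I M̄ᵀ]] and let 𝒫 = [[I, 0],[L M⁻¹, I]] · blkdiag(M, −(1/α)Ŝ) · [[I, M⁻¹ Lᵀ],[0, I]] be the indefinite preconditioner. Then: (a) every real number λ for which there exists a nonzero vector z with J^red z = λ·(𝒫 z) satisfies λ = 1 or 1/2 ≤ λ ≤ ξ; (b) the eigenvalue 1 has multiplicity at least 2n − 2r, in the sense that the kernel of J^red − 𝒫 has dimension at least 2n − 2r, where r is the number of indices i with (Π_I)_{ii} = 1. -/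
import Mathlib


open Matrix
open scoped Matrix.Norms.L2Operator

/-- The operator norm of a real matrix induced by the Euclidean vector norm. -/
noncomputable def l2OpNorm {m n : Type*} [Fintype m] [Fintype n] [DecidableEq n]
    (A : Matrix m n ℝ) : ℝ :=
  ‖LinearMap.toContinuousLinearMap (Matrix.toEuclideanLin A)‖

lemma l2OpNorm_eq_norm {m n : Type*} [Fintype m] [Fintype n] [DecidableEq n]
    (A : Matrix m n ℝ) : l2OpNorm A = ‖A‖ := rfl

lemma l2OpNorm_nonneg {m n : Type*} [Fintype m] [Fintype n] [DecidableEq n]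
    (A : Matrix m n ℝ) : 0 ≤ l2OpNorm A := norm_nonneg _

lemma sqrt_sum_sq_eq_norm {n : Type*} [Fintype n] (x : n → ℝ) :
    Real.sqrt (∑ i, x i ^ 2) = ‖(EuclideanSpace.equiv n ℝ).symm x‖ := by
  rw [EuclideanSpace.norm_eq]
  congr 1
  refine Finset.sum_congr rfl fun i _ => ?_
  simp [sq_abs]

lemma mulVec_transpose_norm_le {m n : Type*} [Fintype m] [Fintype n] [DecidableEq m]
    [DecidableEq n] (A : Matrix m n ℝ) (x : m → ℝ) :
    Real.sqrt (∑ i, (Aᵀ *ᵥ x) i ^ 2) ≤ l2OpNorm A * Real.sqrt (∑ i, x i ^ 2) := by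
  rw [sqrt_sum_sq_eq_norm, sqrt_sum_sq_eq_norm, l2OpNorm_eq_norm]
  have h : Aᵀ = Aᴴ := by ext i j; simp [conjTranspose_apply]
  rw [h, ← Matrix.l2_opNorm_conjTranspose A]
  exact Matrix.l2_opNorm_mulVec Aᴴ ((EuclideanSpace.equiv m ℝ).symm x)

lemma sub_sqrt_sum_sq_le {n : Type*} [Fintype n] (w u : n → ℝ) :
    Real.sqrt (∑ i, (w i - u i) ^ 2) ≤
      Real.sqrt (∑ i, w i ^ 2) + Real.sqrt (∑ i, u i ^ 2) := by
  rw [sqrt_sum_sq_eq_norm, sqrt_sum_sq_eq_norm, sqrt_sum_sq_eq_norm]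
  calc ‖(EuclideanSpace.equiv n ℝ).symm fun i => w i - u i‖
      = ‖(EuclideanSpace.equiv n ℝ).symm w - (EuclideanSpace.equiv n ℝ).symm u‖ := by
        rw [← map_sub]; rfl
    _ ≤ _ := norm_sub_le _ _

lemma matrix_rank_add_le {m n : Type*} [Fintype m] [Fintype n] (A B : Matrix m n ℝ) :
    (A + B).rank ≤ A.rank + B.rank := by
  classical
  rw [Matrix.rank, Matrix.rank, Matrix.rank, Matrix.mulVecLin_add]
  refine le_trans (Submodule.finrank_mono ?_)
    (Submodule.finrank_add_le_finrank_add_finrank _ _)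
  rintro x ⟨v, rfl⟩
  exact Submodule.add_mem_sup ⟨v, rfl⟩ ⟨v, rfl⟩

lemma sum_subtype_card_aux {n : ℕ} (p : Fin n → ℝ) :
    Fintype.card {i : Fin n ⊕ Fin n // Sum.elim (fun _ : Fin n => (0 : ℝ)) p i ≠ 0} =
      Fintype.card {j : Fin n // p j ≠ 0} := by
  refine Fintype.card_congr ?_
  refine ⟨fun x => ?_, fun j => ⟨Sum.inr j.1, j.2⟩, ?_, ?_⟩
  · rcases x with ⟨i, h⟩
    cases i with
    | inl a => exact absurd rfl h
    | inr b => exact ⟨b, h⟩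
  · rintro ⟨i, h⟩
    cases i with
    | inl a => exact absurd rfl h
    | inr b => rfl
  · rintro ⟨j, h⟩; rfl

lemma dot_diag_quadform {n : ℕ} (f s : Fin n → ℝ) :
    s ⬝ᵥ (Matrix.diagonal f *ᵥ s) = ∑ i, f i * s i ^ 2 := by
  simp only [dotProduct, Matrix.mulVec_diagonal]
  exact Finset.sum_congr rfl fun i _ => by ring

set_option maxHeartbeats 2000000 in
/-- spectrum of the reduced system preconditioned by the indefinite
preconditioner: every eigenvalue is 1 or lies in [1/2, ξ], and the eigenvalue 1 has
multiplicity at least 2n − 2r. -/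
theorem stmt_14 (n : ℕ) (hn : 1 ≤ n)
    (L Mb M Pi : Matrix (Fin n) (Fin n) ℝ)
    (hM : M.IsDiag) (hMpos : ∀ i, 0 < M i i)
    (hPi : Pi.IsDiag) (hPi01 : ∀ i, Pi i i = 0 ∨ Pi i i = 1)
    (α : ℝ) (hα : 0 < α)
    (hinv : IsUnit (Real.sqrt α • L + Mb * Pi).det) :
    let Sh : Matrix (Fin n) (Fin n) ℝ :=
      (Real.sqrt α • L + Mb * Pi) * M⁻¹ * (Real.sqrt α • L + Mb * Pi)ᵀ
    let ζ : ℝ := l2OpNorm (Matrix.diagonal (fun i => Real.sqrt (M i i)) *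
      (Real.sqrt α • L + Mb * Pi)⁻¹ * (Real.sqrt α • L) *
      Matrix.diagonal (fun i => (Real.sqrt (M i i))⁻¹))
    let ξ : ℝ := ζ ^ 2 + (1 + ζ) ^ 2
    let Jred : Matrix (Fin n ⊕ Fin n) (Fin n ⊕ Fin n) ℝ :=
      Matrix.fromBlocks M Lᵀ L (-(α⁻¹ • (Mb * M⁻¹ * Pi * Mbᵀ)))
    let P : Matrix (Fin n ⊕ Fin n) (Fin n ⊕ Fin n) ℝ :=
      Matrix.fromBlocks 1 0 (L * M⁻¹) 1 *
        Matrix.fromBlocks M 0 0 (-(α⁻¹ • Sh)) *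
        Matrix.fromBlocks 1 (M⁻¹ * Lᵀ) 0 1
    (∀ (lam : ℝ) (z : Fin n ⊕ Fin n → ℝ), z ≠ 0 →
        Jred.mulVec z = lam • P.mulVec z →
        lam = 1 ∨ (1 / 2 ≤ lam ∧ lam ≤ ξ)) ∧
      2 * n - 2 * (Finset.univ.filter (fun i => Pi i i = 1)).card ≤
        Module.finrank ℝ (LinearMap.ker (Jred - P).mulVecLin) := by
  classical
  intro Sh ζ ξ Jred P
  -- notation
  obtain ⟨sα, hsα_def⟩ : ∃ s : ℝ, s = Real.sqrt α := ⟨_, rfl⟩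
  have hsα : 0 < sα := hsα_def ▸ Real.sqrt_pos.mpr hα
  have hsα2 : sα * sα = α := hsα_def ▸ Real.mul_self_sqrt hα.le
  obtain ⟨d, hd_def⟩ : ∃ d : Fin n → ℝ, d = fun i => M i i := ⟨_, rfl⟩
  obtain ⟨p, hp_def⟩ : ∃ p : Fin n → ℝ, p = fun i => Pi i i := ⟨_, rfl⟩
  have hdpos : ∀ i, 0 < d i := by rw [hd_def]; exact hMpos
  have hp01 : ∀ i, p i = 0 ∨ p i = 1 := by rw [hp_def]; exact hPi01
  have hp2 : ∀ i, p i * p i = p i := by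
    intro i; rcases hp01 i with h | h <;> rw [h] <;> ring
  have hMdiag : M = diagonal d := by rw [hd_def]; exact hM.diagonal_diag.symm
  have hPidiag : Pi = diagonal p := by rw [hp_def]; exact hPi.diagonal_diag.symm
  have hMdet : IsUnit M.det := by
    refine isUnit_iff_ne_zero.mpr ?_
    rw [hMdiag, det_diagonal]
    exact (Finset.prod_pos fun i _ => hdpos i).ne'
  have hMinv : M⁻¹ = diagonal fun i => (d i)⁻¹ := by
    apply inv_eq_right_inv
    rw [hMdiag, diagonal_mul_diagonal, ← diagonal_one]
    have : (fun i => d i * (d i)⁻¹) = fun _ => (1 : ℝ) :=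
      funext fun i => mul_inv_cancel₀ (hdpos i).ne'
    rw [this]
  have hPiT : Piᵀ = Pi := by rw [hPidiag, diagonal_transpose]
  have hK : (Real.sqrt α • L + Mb * Pi) = sα • L + Mb * Pi := by rw [hsα_def]
  have hKdet : IsUnit (sα • L + Mb * Pi).det := hK ▸ hinv
  have hKT : (sα • L + Mb * Pi)ᵀ = sα • Lᵀ + Pi * Mbᵀ := by
    rw [transpose_add, transpose_smul, transpose_mul, hPiT]
  have hMiM : M⁻¹ * M = 1 := nonsing_inv_mul M hMdet
  have hMMi : M * M⁻¹ = 1 := mul_nonsing_inv M hMdet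
  have hc1 : ∀ B : Matrix (Fin n) (Fin n) ℝ, M * (M⁻¹ * B) = B :=
    fun B => mul_nonsing_inv_cancel_left M B hMdet
  have hc2 : ∀ B : Matrix (Fin n) (Fin n) ℝ, M⁻¹ * (M * B) = B :=
    fun B => nonsing_inv_mul_cancel_left M B hMdet
  have hP : P = fromBlocks M Lᵀ L (L * (M⁻¹ * Lᵀ) + -(α⁻¹ • Sh)) := by
    show fromBlocks 1 0 (L * M⁻¹) 1 * fromBlocks M 0 0 (-(α⁻¹ • Sh)) *
        fromBlocks 1 (M⁻¹ * Lᵀ) 0 1 = _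
    rw [fromBlocks_multiply, fromBlocks_multiply]
    simp [Matrix.mul_assoc, hc1, hc2, hMiM, hMMi]
  have hJred : Jred = fromBlocks M Lᵀ L (-(α⁻¹ • (Mb * M⁻¹ * Pi * Mbᵀ))) := rfl
  have hcomm : Pi * (M⁻¹ * Pi) = M⁻¹ * Pi := by
    rw [hMinv, hPidiag, diagonal_mul_diagonal, diagonal_mul_diagonal]
    have : (fun i => p i * ((d i)⁻¹ * p i)) = fun i => (d i)⁻¹ * p i :=
      funext fun i => by rcases hp01 i with h | h <;> rw [h] <;> ring
    rw [this]
  have hcomm2 : Pi * (M⁻¹ * (Pi * Mbᵀ)) = M⁻¹ * (Pi * Mbᵀ) := by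
    calc Pi * (M⁻¹ * (Pi * Mbᵀ)) = Pi * (M⁻¹ * Pi) * Mbᵀ := by
          rw [Matrix.mul_assoc, Matrix.mul_assoc]
      _ = M⁻¹ * Pi * Mbᵀ := by rw [hcomm]
      _ = M⁻¹ * (Pi * Mbᵀ) := by rw [Matrix.mul_assoc]
  have hSh : Sh = (sα • L + Mb * Pi) * M⁻¹ * (sα • L + Mb * Pi)ᵀ := by rw [← hK]
  have hexpand : α⁻¹ • Sh = L * (M⁻¹ * Lᵀ) + sα⁻¹ • (L * (M⁻¹ * (Pi * Mbᵀ))) +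
      sα⁻¹ • (Mb * (Pi * (M⁻¹ * Lᵀ))) + α⁻¹ • (Mb * (M⁻¹ * (Pi * Mbᵀ))) := by
    rw [hSh, hKT]
    simp only [add_mul, mul_add, smul_mul_assoc, mul_smul_comm, smul_smul, smul_add,
      Matrix.mul_assoc, hcomm2]
    match_scalars <;> field_simp <;> nlinarith [hsα2, hsα]
  have hJP : Jred - P = fromBlocks 0 0 0
      (sα⁻¹ • (L * (M⁻¹ * (Pi * Mbᵀ))) + sα⁻¹ • (Mb * (Pi * (M⁻¹ * Lᵀ)))) := by
    rw [hJred, hP]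
    have : Mb * M⁻¹ * Pi * Mbᵀ = Mb * (M⁻¹ * (Pi * Mbᵀ)) := by
      rw [Matrix.mul_assoc, Matrix.mul_assoc]
    rw [this]
    ext (i | i) (j | j) <;>
      simp only [Matrix.sub_apply, Matrix.fromBlocks_apply₁₁, Matrix.fromBlocks_apply₁₂,
        Matrix.fromBlocks_apply₂₁, Matrix.fromBlocks_apply₂₂, Matrix.zero_apply, sub_self]
    · have := congrFun (congrFun hexpand i) j
      simp only [Matrix.add_apply, Matrix.smul_apply, Matrix.neg_apply, smul_eq_mul] at this ⊢
      linarith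
  constructor
  · intro lam z hzne hz
    by_cases hlam : lam = 1
    · exact Or.inl hlam
    right
    obtain ⟨x, hx_def⟩ : ∃ x : Fin n → ℝ, x = fun i => z (Sum.inl i) := ⟨_, rfl⟩
    obtain ⟨y, hy_def⟩ : ∃ y : Fin n → ℝ, y = fun i => z (Sum.inr i) := ⟨_, rfl⟩
    have hzs : z = Sum.elim x y := by
      funext i
      cases i with
      | inl i => simp [hx_def]
      | inr i => simp [hy_def]
    rw [show Jred.mulVec z = Jred *ᵥ z from rfl, show P.mulVec z = P *ᵥ z from rfl,
      hzs, hJred, hP, fromBlocks_mulVec, fromBlocks_mulVec] at hz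
    have eq1 : M *ᵥ x + Lᵀ *ᵥ y = lam • (M *ᵥ x + Lᵀ *ᵥ y) := by
      funext i
      have := congrFun hz (Sum.inl i)
      simpa using this
    have eq2 : L *ᵥ x + (-(α⁻¹ • (Mb * M⁻¹ * Pi * Mbᵀ))) *ᵥ y =
        lam • (L *ᵥ x + (L * (M⁻¹ * Lᵀ) + -(α⁻¹ • Sh)) *ᵥ y) := by
      funext i
      have := congrFun hz (Sum.inr i)
      simpa using this
    have hv0 : M *ᵥ x + Lᵀ *ᵥ y = 0 := by
      have h2 : (1 - lam) • (M *ᵥ x + Lᵀ *ᵥ y) = 0 := by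
        rw [sub_smul, one_smul, ← eq1, sub_self]
      rcases smul_eq_zero.mp h2 with h3 | h3
      · exact absurd (by linarith [sub_eq_zero.mp (by linarith [h3] : (1 : ℝ) - lam = 0)] :
          lam = 1) hlam
      · exact h3
    have hMx : M *ᵥ x = -(Lᵀ *ᵥ y) := by
      rw [add_eq_zero_iff_eq_neg] at hv0
      exact hv0
    have hxy : x = -(M⁻¹ *ᵥ (Lᵀ *ᵥ y)) := by
      have h4 := congrArg (fun v => M⁻¹ *ᵥ v) hMx
      simpa [Matrix.mulVec_mulVec, hMiM, Matrix.one_mulVec, Matrix.mulVec_neg] using h4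
    have hyne : y ≠ 0 := by
      intro h0
      apply hzne
      have hx0 : x = 0 := by rw [hxy, h0]; simp
      rw [hzs, h0, hx0]
      funext i
      cases i <;> rfl
    -- key vectors
    obtain ⟨t, ht_def⟩ : ∃ t : Fin n → ℝ, t = Lᵀ *ᵥ y := ⟨_, rfl⟩
    obtain ⟨s, hs_def⟩ : ∃ s : Fin n → ℝ, s = Mbᵀ *ᵥ y := ⟨_, rfl⟩
    obtain ⟨k, hk_def⟩ : ∃ k : Fin n → ℝ, k = (sα • L + Mb * Pi)ᵀ *ᵥ y := ⟨_, rfl⟩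
    have hk_comp : ∀ i, k i = sα * t i + p i * s i := by
      intro i
      rw [hk_def, hKT, Matrix.add_mulVec, Matrix.smul_mulVec, ← Matrix.mulVec_mulVec,
        hPidiag, ← hs_def, ← ht_def]
      simp [Matrix.mulVec_diagonal]
    -- scalar pieces
    have piece1 : y ⬝ᵥ (L *ᵥ x) = -(t ⬝ᵥ (M⁻¹ *ᵥ t)) := by
      rw [hxy, Matrix.mulVec_neg, dotProduct_neg, Matrix.dotProduct_mulVec,
        ← Matrix.mulVec_transpose, ← ht_def]
    have piece2 : y ⬝ᵥ ((Mb * M⁻¹ * Pi * Mbᵀ) *ᵥ y) = ∑ i, (d i)⁻¹ * p i * s i ^ 2 := by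
      rw [show Mb * M⁻¹ * Pi * Mbᵀ = Mb * ((M⁻¹ * Pi) * Mbᵀ) by
          simp only [Matrix.mul_assoc],
        ← Matrix.mulVec_mulVec, Matrix.dotProduct_mulVec, ← Matrix.mulVec_transpose,
        ← hs_def, ← Matrix.mulVec_mulVec, ← hs_def, hMinv, hPidiag, diagonal_mul_diagonal,
        dot_diag_quadform]
    have piece3 : y ⬝ᵥ ((L * (M⁻¹ * Lᵀ)) *ᵥ y) = t ⬝ᵥ (M⁻¹ *ᵥ t) := by
      rw [← Matrix.mulVec_mulVec, Matrix.dotProduct_mulVec, ← Matrix.mulVec_transpose,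
        ← ht_def, ← Matrix.mulVec_mulVec, ← ht_def]
    have piece4 : y ⬝ᵥ (Sh *ᵥ y) = k ⬝ᵥ (M⁻¹ *ᵥ k) := by
      rw [hSh, Matrix.mul_assoc, ← Matrix.mulVec_mulVec, Matrix.dotProduct_mulVec,
        ← Matrix.mulVec_transpose, ← hk_def, ← Matrix.mulVec_mulVec, ← hk_def]
    have hdota : t ⬝ᵥ (M⁻¹ *ᵥ t) = ∑ i, (d i)⁻¹ * t i ^ 2 := by
      rw [hMinv, dot_diag_quadform]
    have hdotc : k ⬝ᵥ (M⁻¹ *ᵥ k) = ∑ i, (d i)⁻¹ * k i ^ 2 := by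
      rw [hMinv, dot_diag_quadform]
    -- the key scalar equation
    have key := congrArg (fun v => y ⬝ᵥ v) eq2
    simp only [dotProduct_add, Matrix.neg_mulVec, dotProduct_neg, Matrix.smul_mulVec,
      dotProduct_smul, smul_eq_mul, Matrix.add_mulVec] at key
    rw [piece1, piece2, piece3, piece4, hdota, hdotc] at key
    have main : α * (∑ i, (d i)⁻¹ * t i ^ 2) + (∑ i, (d i)⁻¹ * p i * s i ^ 2) =
        lam * (∑ i, (d i)⁻¹ * k i ^ 2) := by
      linear_combination (-α) * key +
        ((lam * (∑ i, (d i)⁻¹ * k i ^ 2)) - (∑ i, (d i)⁻¹ * p i * s i ^ 2)) *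
          (mul_inv_cancel₀ hα.ne')
    -- normalized vectors
    obtain ⟨g, hg_def⟩ : ∃ g : Fin n → ℝ, g = fun i => (Real.sqrt (M i i))⁻¹ := ⟨_, rfl⟩
    obtain ⟨e, he_def⟩ : ∃ e : Fin n → ℝ, e = fun i => Real.sqrt (M i i) := ⟨_, rfl⟩
    have hepos : ∀ i, 0 < e i := by
      intro i; rw [he_def]; exact Real.sqrt_pos.mpr (hMpos i)
    have hgpos : ∀ i, 0 < g i := by
      intro i; rw [hg_def]
      exact inv_pos.mpr (Real.sqrt_pos.mpr (hMpos i))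
    have heg : ∀ i, e i * g i = 1 := by
      intro i; rw [he_def, hg_def]
      exact mul_inv_cancel₀ (Real.sqrt_pos.mpr (hMpos i)).ne'
    have hg2 : ∀ i, g i * g i = (d i)⁻¹ := by
      intro i
      rw [hg_def, hd_def, ← mul_inv, Real.mul_self_sqrt (hMpos i).le]
    obtain ⟨u, hu_def⟩ : ∃ u : Fin n → ℝ, u = fun i => sα * t i * g i := ⟨_, rfl⟩
    obtain ⟨v, hv_def⟩ : ∃ v : Fin n → ℝ, v = fun i => p i * s i * g i := ⟨_, rfl⟩
    obtain ⟨w, hw_def⟩ : ∃ w : Fin n → ℝ, w = fun i => k i * g i := ⟨_, rfl⟩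
    have hQu : (∑ i, u i ^ 2) = α * ∑ i, (d i)⁻¹ * t i ^ 2 := by
      rw [Finset.mul_sum]
      refine Finset.sum_congr rfl fun i _ => ?_
      simp only [hu_def]
      calc (sα * t i * g i) ^ 2 = (sα * sα) * ((g i * g i) * t i ^ 2) := by ring
        _ = α * ((d i)⁻¹ * t i ^ 2) := by rw [hsα2, hg2]
    have hQv : (∑ i, v i ^ 2) = ∑ i, (d i)⁻¹ * p i * s i ^ 2 := by
      refine Finset.sum_congr rfl fun i _ => ?_
      simp only [hv_def]
      calc (p i * s i * g i) ^ 2 = (p i * p i) * ((g i * g i) * s i ^ 2) := by ring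
        _ = p i * ((d i)⁻¹ * s i ^ 2) := by rw [hp2, hg2]
        _ = (d i)⁻¹ * p i * s i ^ 2 := by ring
    have hQw : (∑ i, w i ^ 2) = ∑ i, (d i)⁻¹ * k i ^ 2 := by
      refine Finset.sum_congr rfl fun i _ => ?_
      simp only [hw_def]
      calc (k i * g i) ^ 2 = (g i * g i) * k i ^ 2 := by ring
        _ = (d i)⁻¹ * k i ^ 2 := by rw [hg2]
    have huvw : ∀ i, w i = u i + v i := by
      intro i
      simp only [hu_def, hv_def, hw_def]
      rw [hk_comp i]
      ring
    have main2 : lam * (∑ i, w i ^ 2) = (∑ i, u i ^ 2) + (∑ i, v i ^ 2) := by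
      rw [hQu, hQv, hQw]
      linarith [main]
    -- positivity of Qw
    have hKTdet : IsUnit ((sα • L + Mb * Pi)ᵀ).det := by rwa [det_transpose]
    have hkne : k ≠ 0 := by
      intro h0
      apply hyne
      have h6 : y = ((sα • L + Mb * Pi)ᵀ)⁻¹ *ᵥ ((sα • L + Mb * Pi)ᵀ *ᵥ y) := by
        rw [Matrix.mulVec_mulVec, nonsing_inv_mul _ hKTdet, Matrix.one_mulVec]
      rw [← hk_def, h0, Matrix.mulVec_zero] at h6
      exact h6
    obtain ⟨i0, hi0⟩ := Function.ne_iff.mp hkne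
    have hwne : w i0 ≠ 0 := by
      rw [hw_def]
      exact mul_ne_zero hi0 (hgpos i0).ne'
    have hQwpos : 0 < ∑ i, w i ^ 2 := by
      have h7 : 0 < w i0 ^ 2 := lt_of_le_of_ne (sq_nonneg _) (Ne.symm (pow_ne_zero 2 hwne))
      calc (0 : ℝ) < w i0 ^ 2 := h7
        _ ≤ ∑ i, w i ^ 2 :=
          Finset.single_le_sum (fun i _ => sq_nonneg (w i)) (Finset.mem_univ i0)
    -- lower bound
    have hlow : 1 / 2 ≤ lam := by
      have hhalf : (∑ i, w i ^ 2) ≤ 2 * ((∑ i, u i ^ 2) + (∑ i, v i ^ 2)) := by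
        calc (∑ i, w i ^ 2) ≤ ∑ i, (2 * u i ^ 2 + 2 * v i ^ 2) := by
              refine Finset.sum_le_sum fun i _ => ?_
              rw [huvw i]
              nlinarith [sq_nonneg (u i - v i)]
          _ = 2 * ((∑ i, u i ^ 2) + (∑ i, v i ^ 2)) := by
              rw [Finset.sum_add_distrib, ← Finset.mul_sum, ← Finset.mul_sum]
              ring
      nlinarith [main2, hQwpos, hhalf]
    -- upper bound
    obtain ⟨C, hC_def⟩ : ∃ C : Matrix (Fin n) (Fin n) ℝ,
        C = diagonal e * (sα • L + Mb * Pi)⁻¹ * (sα • L) * diagonal g := ⟨_, rfl⟩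
    have hζC : ζ = l2OpNorm C := by
      rw [hC_def, he_def, hg_def, hsα_def]
    have hζ0 : 0 ≤ ζ := by rw [hζC]; exact l2OpNorm_nonneg C
    have hCt : Cᵀ = diagonal g * ((sα • Lᵀ) * (((sα • L + Mb * Pi)ᵀ)⁻¹ * diagonal e)) := by
      rw [hC_def, transpose_mul, transpose_mul, transpose_mul, diagonal_transpose,
        diagonal_transpose, transpose_smul, transpose_nonsing_inv]
    have hCw : Cᵀ *ᵥ w = u := by
      have hwvec : w = diagonal g *ᵥ k := by
        funext i
        rw [Matrix.mulVec_diagonal, hw_def]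
        ring
      rw [hCt, hwvec]
      simp only [← Matrix.mulVec_mulVec]
      have c1 : diagonal e *ᵥ (diagonal g *ᵥ k) = k := by
        rw [Matrix.mulVec_mulVec, diagonal_mul_diagonal,
          show (fun i => e i * g i) = fun _ => (1 : ℝ) from funext heg, diagonal_one,
          Matrix.one_mulVec]
      rw [c1]
      have c2 : ((sα • L + Mb * Pi)ᵀ)⁻¹ *ᵥ k = y := by
        rw [hk_def, Matrix.mulVec_mulVec, nonsing_inv_mul _ hKTdet, Matrix.one_mulVec]
      rw [c2, Matrix.smul_mulVec, ← ht_def]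
      funext i
      simp only [Matrix.mulVec_diagonal, hu_def, Pi.smul_apply, smul_eq_mul]
      rw [show (sα • t) i = sα * t i from rfl]
      ring
    have hsum_nonneg : ∀ q : Fin n → ℝ, (0 : ℝ) ≤ ∑ i, q i ^ 2 :=
      fun q => Finset.sum_nonneg fun i _ => sq_nonneg _
    have hQuQw : Real.sqrt (∑ i, u i ^ 2) ≤ ζ * Real.sqrt (∑ i, w i ^ 2) := by
      have h8 := mulVec_transpose_norm_le C w
      rw [hCw] at h8
      rw [hζC]
      exact h8
    have hQu_le : (∑ i, u i ^ 2) ≤ ζ ^ 2 * ∑ i, w i ^ 2 := by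
      calc (∑ i, u i ^ 2) = Real.sqrt (∑ i, u i ^ 2) ^ 2 :=
            (Real.sq_sqrt (hsum_nonneg u)).symm
        _ ≤ (ζ * Real.sqrt (∑ i, w i ^ 2)) ^ 2 :=
            pow_le_pow_left₀ (Real.sqrt_nonneg _) hQuQw 2
        _ = ζ ^ 2 * ∑ i, w i ^ 2 := by
            rw [mul_pow, Real.sq_sqrt (hsum_nonneg w)]
    have hQv_le : (∑ i, v i ^ 2) ≤ (1 + ζ) ^ 2 * ∑ i, w i ^ 2 := by
      have hvsub : Real.sqrt (∑ i, v i ^ 2) ≤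
          Real.sqrt (∑ i, w i ^ 2) + Real.sqrt (∑ i, u i ^ 2) := by
        have h9 : (∑ i, v i ^ 2) = ∑ i, (w i - u i) ^ 2 := by
          refine Finset.sum_congr rfl fun i _ => ?_
          rw [huvw i]
          ring
        rw [h9]
        exact sub_sqrt_sum_sq_le w u
      have h10 : Real.sqrt (∑ i, v i ^ 2) ≤ (1 + ζ) * Real.sqrt (∑ i, w i ^ 2) := by
        have := Real.sqrt_nonneg (∑ i, w i ^ 2)
        nlinarith [hQuQw, hvsub]
      calc (∑ i, v i ^ 2) = Real.sqrt (∑ i, v i ^ 2) ^ 2 :=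
            (Real.sq_sqrt (hsum_nonneg v)).symm
        _ ≤ ((1 + ζ) * Real.sqrt (∑ i, w i ^ 2)) ^ 2 := by
            apply pow_le_pow_left₀ (Real.sqrt_nonneg _) h10
        _ = (1 + ζ) ^ 2 * ∑ i, w i ^ 2 := by
            rw [mul_pow, Real.sq_sqrt (hsum_nonneg w)]
    have hξ : ξ = ζ ^ 2 + (1 + ζ) ^ 2 := rfl
    refine ⟨hlow, ?_⟩
    rw [hξ]
    nlinarith [main2, hQu_le, hQv_le, hQwpos]
  · -- part (b)
    have hG : (fromBlocks (0 : Matrix (Fin n) (Fin n) ℝ) 0 0 Pi).rank =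
        (Finset.univ.filter (fun i => Pi i i = 1)).card := by
      have hGd : (fromBlocks (0 : Matrix (Fin n) (Fin n) ℝ) 0 0 Pi) =
          diagonal (Sum.elim (fun _ : Fin n => (0 : ℝ)) p) := by
        rw [hPidiag, ← fromBlocks_diagonal, diagonal_zero]
      rw [hGd, Matrix.rank_diagonal, sum_subtype_card_aux, Fintype.card_subtype]
      have hiff : ∀ j : Fin n, p j ≠ 0 ↔ Pi j j = 1 := by
        intro j
        constructor
        · intro hj
          rcases hp01 j with h | h
          · exact absurd h hj
          · simpa [hp_def] using h
        · intro hj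
          simp [hp_def, hj]
      congr 1
      exact Finset.filter_congr fun j _ => hiff j
    have hT1 : (fromBlocks (0 : Matrix (Fin n) (Fin n) ℝ) 0 0
        (sα⁻¹ • (L * (M⁻¹ * (Pi * Mbᵀ))))) =
        fromBlocks 0 0 0 (sα⁻¹ • (L * M⁻¹)) * fromBlocks 0 0 0 Pi *
          fromBlocks 0 0 0 Mbᵀ := by
      rw [fromBlocks_multiply, fromBlocks_multiply]
      simp [Matrix.mul_assoc, smul_mul_assoc]
    have hT2 : (fromBlocks (0 : Matrix (Fin n) (Fin n) ℝ) 0 0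
        (sα⁻¹ • (Mb * (Pi * (M⁻¹ * Lᵀ))))) =
        fromBlocks 0 0 0 (sα⁻¹ • Mb) * fromBlocks 0 0 0 Pi *
          fromBlocks 0 0 0 (M⁻¹ * Lᵀ) := by
      rw [fromBlocks_multiply, fromBlocks_multiply]
      simp [Matrix.mul_assoc, smul_mul_assoc]
    have hrank : (Jred - P).rank ≤
        2 * (Finset.univ.filter (fun i => Pi i i = 1)).card := by
      rw [hJP]
      have hsplit : (fromBlocks 0 0 0
          (sα⁻¹ • (L * (M⁻¹ * (Pi * Mbᵀ))) + sα⁻¹ • (Mb * (Pi * (M⁻¹ * Lᵀ)))) :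
          Matrix (Fin n ⊕ Fin n) (Fin n ⊕ Fin n) ℝ) =
          fromBlocks 0 0 0 (sα⁻¹ • (L * (M⁻¹ * (Pi * Mbᵀ)))) +
          fromBlocks 0 0 0 (sα⁻¹ • (Mb * (Pi * (M⁻¹ * Lᵀ)))) := by
        rw [fromBlocks_add]
        simp
      rw [hsplit]
      have h1 : (fromBlocks (0 : Matrix (Fin n) (Fin n) ℝ) 0 0
          (sα⁻¹ • (L * (M⁻¹ * (Pi * Mbᵀ))))).rank ≤
          (Finset.univ.filter (fun i => Pi i i = 1)).card := by
        rw [hT1, ← hG]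
        exact le_trans (Matrix.rank_mul_le_left _ _) (Matrix.rank_mul_le_right _ _)
      have h2 : (fromBlocks (0 : Matrix (Fin n) (Fin n) ℝ) 0 0
          (sα⁻¹ • (Mb * (Pi * (M⁻¹ * Lᵀ))))).rank ≤
          (Finset.univ.filter (fun i => Pi i i = 1)).card := by
        rw [hT2, ← hG]
        exact le_trans (Matrix.rank_mul_le_left _ _) (Matrix.rank_mul_le_right _ _)
      calc (fromBlocks 0 0 0 (sα⁻¹ • (L * (M⁻¹ * (Pi * Mbᵀ)))) +
          fromBlocks 0 0 0 (sα⁻¹ • (Mb * (Pi * (M⁻¹ * Lᵀ)))) :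
          Matrix (Fin n ⊕ Fin n) (Fin n ⊕ Fin n) ℝ).rank ≤ _ + _ :=
            matrix_rank_add_le _ _
        _ ≤ _ := by omega
    have hrn := LinearMap.finrank_range_add_finrank_ker (Jred - P).mulVecLin
    rw [Module.finrank_fintype_fun_eq_card] at hrn
    have hcard : Fintype.card (Fin n ⊕ Fin n) = 2 * n := by simp [two_mul]
    rw [hcard] at hrn
    have hrr : (Jred - P).rank =
        Module.finrank ℝ (LinearMap.range (Jred - P).mulVecLin) := rfl
    omega
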